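/- Let f be a homeomorphism of a compact metric space (X, d). If f is both distal and expansive, then X is finite. -/

import Mathlib

open Filter Topology

/-- The `n`-th iterate (`n ∈ ℤ`) of a homeomorphism `f`, as a map `X → X`. -/
def iterZ {X : Type*} [TopologicalSpace X] (f : X ≃ₜ X) (n : ℤ) : X → X :=
  ⇑(f.toEquiv ^ n)

/-- The ω-limit set of `x`: limits of `f^{nᵢ}(x)` along strictly increasing
sequences `0 < n₁ < n₂ < ⋯`. -/
def posLimitSet {X : Type*} [TopologicalSpace X] (f : X ≃ₜ X) (x : X) : Set X :=
  {y | ∃ n : ℕ → ℕ, StrictMono n ∧ 0 < n 0 ∧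
    Tendsto (fun i => iterZ f (n i) x) atTop (𝓝 y)}

/-- The α-limit set of `x`: limits of `f^{-nᵢ}(x)` along strictly increasing
sequences `0 < n₁ < n₂ < ⋯`. -/
def negLimitSet {X : Type*} [TopologicalSpace X] (f : X ≃ₜ X) (x : X) : Set X :=
  {y | ∃ n : ℕ → ℕ, StrictMono n ∧ 0 < n 0 ∧
    Tendsto (fun i => iterZ f (-(n i : ℤ)) x) atTop (𝓝 y)}

/-- `x` is recurrent if it is positively or negatively recurrent. -/
def RecurrentPt {X : Type*} [TopologicalSpace X] (f : X ≃ₜ X) (x : X) : Prop :=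
  x ∈ posLimitSet f x ∨ x ∈ negLimitSet f x

/-- `f` is expansive with expansivity constant `c`. -/
def ExpansiveWith {X : Type*} [MetricSpace X] (f : X ≃ₜ X) (c : ℝ) : Prop :=
  0 < c ∧ ∀ x y : X, x ≠ y → ∃ n : ℤ, c < dist (iterZ f n x) (iterZ f n y)

/-- `f` is expansive. -/
def Expansive {X : Type*} [MetricSpace X] (f : X ≃ₜ X) : Prop :=
  ∃ c : ℝ, ExpansiveWith f c

/-- The full orbit `{fⁿ(x) : n ∈ ℤ}` of a point. -/
def fullOrbit {X : Type*} [TopologicalSpace X] (f : X ≃ₜ X) (x : X) : Set X :=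
  Set.range fun n : ℤ => iterZ f n x

/-- `E` is a minimal set: nonempty, closed, invariant (`f(E) = E`), with no proper
nonempty closed invariant subset. -/
def IsMinimalSet {X : Type*} [TopologicalSpace X] (f : X ≃ₜ X) (E : Set X) : Prop :=
  E.Nonempty ∧ IsClosed E ∧ f '' E = E ∧
    ∀ E' ⊆ E, E'.Nonempty → IsClosed E' → f '' E' = E' → E' = E

/-- `x` is almost periodic: the closure of its orbit is a minimal set. -/
def AlmostPeriodicPt {X : Type*} [TopologicalSpace X] (f : X ≃ₜ X) (x : X) : Prop :=
  IsMinimalSet f (closure (fullOrbit f x))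

/-- The left shift `σ` on `ℤ → F`, as a homeomorphism. -/
def shiftH (F : Type*) [TopologicalSpace F] : (ℤ → F) ≃ₜ (ℤ → F) where
  toFun x n := x (n + 1)
  invFun x n := x (n - 1)
  left_inv x := by funext n; simp
  right_inv x := by funext n; simp
  continuous_toFun := continuous_pi fun n => continuous_apply (n + 1)
  continuous_invFun := continuous_pi fun n => continuous_apply (n - 1)

/-- The `n`-th power (`n ∈ ℕ`) of a homeomorphism, as a homeomorphism. -/
def hpow {X : Type*} [TopologicalSpace X] (f : X ≃ₜ X) : ℕ → X ≃ₜ X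
  | 0 => Homeomorph.refl X
  | n + 1 => (hpow f n).trans f

/-- The local stable set `W^s_ε(x)`. -/
def localStable {X : Type*} [MetricSpace X] (f : X ≃ₜ X) (ε : ℝ) (x : X) : Set X :=
  {y | ∀ n : ℕ, dist (iterZ f n x) (iterZ f n y) ≤ ε}

/-- The local unstable set `W^u_ε(x)`. -/
def localUnstable {X : Type*} [MetricSpace X] (f : X ≃ₜ X) (ε : ℝ) (x : X) : Set X :=
  {y | ∀ n : ℕ, dist (iterZ f (-(n : ℤ)) x) (iterZ f (-(n : ℤ)) y) ≤ ε}

/-- The stable set `W^s(x)`. -/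
def stableSet {X : Type*} [MetricSpace X] (f : X ≃ₜ X) (x : X) : Set X :=
  {y | Tendsto (fun n : ℕ => dist (iterZ f n x) (iterZ f n y)) atTop (𝓝 0)}

/-- The unstable set `W^u(x)`. -/
def unstableSet {X : Type*} [MetricSpace X] (f : X ≃ₜ X) (x : X) : Set X :=
  {y | Tendsto (fun n : ℕ => dist (iterZ f (-(n : ℤ)) x) (iterZ f (-(n : ℤ)) y)) atTop (𝓝 0)}

/-- `f` has the pseudo orbit tracing property. -/
def POTP {X : Type*} [MetricSpace X] (f : X ≃ₜ X) : Prop :=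
  ∀ ε > (0 : ℝ), ∃ δ > (0 : ℝ), ∀ u : ℤ → X,
    (∀ i : ℤ, dist (f (u i)) (u (i + 1)) < δ) →
    ∃ x : X, ∀ i : ℤ, dist (iterZ f i x) (u i) < ε

/-!
If `X` were infinite, it would have a non-isolated point `x`, approximated by points `z k ≠ x`.
Expansivity separates each `z k` from `x` by more than `c` at some time, and infinitely often
in the same time direction; by symmetry, forward. Since `z k → x`, the first such time tends to
infinity, so a limit `(A, B)` of the pairs seen at that time has `dist A B ≥ c` while its whole
past stays `c`-close. Distality keeps the orbits of `A` and `B` uniformly apart, so a limit of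
their backward iterates is a pair of distinct points whose orbits stay `c`-close forever,
contradicting expansivity.
-/

lemma iterZ_eq_coe_zpow {X : Type*} [TopologicalSpace X] (f : X ≃ₜ X) (n : ℤ) :
    iterZ f n = ⇑(f ^ n) :=
  congrArg DFunLike.coe
    (map_zpow (MonoidHom.mk' (Homeomorph.toEquiv : (X ≃ₜ X) → Equiv.Perm X) fun _ _ => rfl)
      f n).symm

lemma continuous_iterZ {X : Type*} [TopologicalSpace X] (f : X ≃ₜ X) (n : ℤ) :
    Continuous (iterZ f n) := by
  rw [iterZ_eq_coe_zpow]
  exact (f ^ n).continuous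

lemma iterZ_iterZ {X : Type*} [TopologicalSpace X] (f : X ≃ₜ X) (m n : ℤ) (x : X) :
    iterZ f m (iterZ f n x) = iterZ f (m + n) x := by
  simp [iterZ, ← Equiv.Perm.mul_apply, ← zpow_add]

lemma iterZ_symm {X : Type*} [TopologicalSpace X] (f : X ≃ₜ X) (n : ℤ) :
    iterZ f.symm n = iterZ f (-n) := by
  simp only [iterZ, ← inv_zpow']
  rfl

def IsDistal {X : Type*} [MetricSpace X] (f : X ≃ₜ X) : Prop :=
  ∀ x y : X, x ≠ y → ∃ c > (0 : ℝ), ∀ n : ℤ, c ≤ dist (iterZ f n x) (iterZ f n y)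

lemma IsDistal.symm {X : Type*} [MetricSpace X] {f : X ≃ₜ X} (hf : IsDistal f) :
    IsDistal f.symm := fun x y hxy => by
  obtain ⟨c, hc, hle⟩ := hf x y hxy
  exact ⟨c, hc, fun n => by simpa only [iterZ_symm] using hle (-n)⟩

lemma exists_dist_le_of_eventually_dist_le {X ι : Type*} [MetricSpace X] [CompactSpace X]
    {g : ι → X → X} (hg : ∀ i, Continuous (g i)) {c c' : ℝ} {a b : ℕ → X}
    (hab : ∀ k, c' ≤ dist (a k) (b k))
    (hle : ∀ i, ∀ᶠ k in atTop, dist (g i (a k)) (g i (b k)) ≤ c) :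
    ∃ A B, c' ≤ dist A B ∧ ∀ i, dist (g i A) (g i B) ≤ c := by
  obtain ⟨⟨A, B⟩, φ, hφ, hlim⟩ := CompactSpace.tendsto_subseq fun k => (a k, b k)
  have hdist {h : X → X} (hh : Continuous h) :
      Tendsto (fun k => dist (h (a (φ k))) (h (b (φ k)))) atTop (𝓝 (dist (h A) (h B))) :=
    (((hh.comp continuous_fst).dist (hh.comp continuous_snd)).tendsto (A, B)).comp hlim
  exact ⟨A, B, ge_of_tendsto' (hdist continuous_id) fun k => hab (φ k),
    fun i => le_of_tendsto (hdist (hg i)) (hφ.tendsto_atTop.eventually (hle i))⟩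

lemma exists_past_dist_le_of_tendsto_of_separated {X : Type*} [MetricSpace X] [CompactSpace X]
    (f : X ≃ₜ X) {c : ℝ} (hc : 0 < c) {x : X} {z : ℕ → X} (hz : Tendsto z atTop (𝓝 x))
    (hsep : ∀ k, ∃ N : ℕ, c < dist (iterZ f N x) (iterZ f N (z k))) :
    ∃ A B, c ≤ dist A B ∧ ∀ n : ℤ, n < 0 → dist (iterZ f n A) (iterZ f n B) ≤ c := by
  classical
  let N k := Nat.find (hsep k)
  have hN_sep k : c < dist (iterZ f (N k) x) (iterZ f (N k) (z k)) := Nat.find_spec (hsep k)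
  have hN_min k (t : ℕ) (ht : t < N k) : dist (iterZ f t x) (iterZ f t (z k)) ≤ c :=
    le_of_not_gt (Nat.find_min (hsep k) ht)
  have hN_tendsto : Tendsto N atTop atTop := by
    refine tendsto_atTop.2 fun T => ?_
    have hclose (t : ℕ) : ∀ᶠ k in atTop, dist (iterZ f t x) (iterZ f t (z k)) < c := by
      filter_upwards [Metric.tendsto_nhds.1 (((continuous_iterZ f t).tendsto x).comp hz) c hc]
        with k hk
      rwa [dist_comm]
    filter_upwards [(eventually_all_finite (Set.finite_lt_nat T)).2 fun t _ => hclose t]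
      with k hk
    exact (Nat.le_find_iff _ _).2 fun t ht => not_lt.2 (hk t ht).le
  obtain ⟨A, B, hAB, hpast⟩ := exists_dist_le_of_eventually_dist_le
    (g := fun n : Set.Iio (0 : ℤ) => iterZ f n) (fun n => continuous_iterZ f n)
    (a := fun k => iterZ f (N k) x) (b := fun k => iterZ f (N k) (z k))
    (c := c) (fun k => (hN_sep k).le) fun ⟨n, hn⟩ => by
      filter_upwards [hN_tendsto.eventually_ge_atTop (-n).toNat] with k hk
      simp only [iterZ_iterZ]
      lift n + N k to ℕ using (by omega) with t ht
      exact hN_min k t (by simp only [Set.mem_Iio] at hn; omega)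
  exact ⟨A, B, hAB, fun n hn => hpast ⟨n, hn⟩⟩

lemma exists_ne_forall_dist_le_of_forall_le_dist {X : Type*} [MetricSpace X] [CompactSpace X]
    (f : X ≃ₜ X) {c c' : ℝ} (hc' : 0 < c') {A B : X}
    (hapart : ∀ n : ℤ, c' ≤ dist (iterZ f n A) (iterZ f n B))
    (hpast : ∀ n : ℤ, n < 0 → dist (iterZ f n A) (iterZ f n B) ≤ c) :
    ∃ A' B', A' ≠ B' ∧ ∀ n : ℤ, dist (iterZ f n A') (iterZ f n B') ≤ c := by
  obtain ⟨A', B', hAB', hle⟩ := exists_dist_le_of_eventually_dist_le (continuous_iterZ f)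
    (a := fun k : ℕ => iterZ f (-k) A) (b := fun k => iterZ f (-k) B) (c := c)
    (fun k => hapart _) fun n => by
      filter_upwards [eventually_gt_atTop n.toNat] with k hk
      simp only [iterZ_iterZ]
      exact hpast _ (by omega)
  exact ⟨A', B', dist_pos.1 (hc'.trans_le hAB'), hle⟩

lemma IsDistal.exists_ne_forall_dist_le {X : Type*} [MetricSpace X] [CompactSpace X]
    {f : X ≃ₜ X} (hf : IsDistal f) {c : ℝ} (hc : 0 < c) {x : X} {z : ℕ → X}
    (hz : Tendsto z atTop (𝓝 x))
    (hsep : ∀ k, ∃ n : ℤ, 0 ≤ n ∧ c < dist (iterZ f n x) (iterZ f n (z k))) :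
    ∃ A B, A ≠ B ∧ ∀ n : ℤ, dist (iterZ f n A) (iterZ f n B) ≤ c := by
  have hsep' k : ∃ N : ℕ, c < dist (iterZ f N x) (iterZ f N (z k)) := by
    obtain ⟨n, hn, hlt⟩ := hsep k
    lift n to ℕ using hn
    exact ⟨n, hlt⟩
  obtain ⟨A, B, hAB, hpast⟩ := exists_past_dist_le_of_tendsto_of_separated f hc hz hsep'
  obtain ⟨c', hc', hapart⟩ := hf A B (dist_pos.1 (hc.trans_le hAB))
  exact exists_ne_forall_dist_le_of_forall_le_dist f hc' hapart hpast

lemma exists_seq_ne_tendsto_of_infinite {X : Type*} [TopologicalSpace X] [FrechetUrysohnSpace X]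
    [CompactSpace X] [Infinite X] :
    ∃ (x : X) (z : ℕ → X), (∀ k, z k ≠ x) ∧ Tendsto z atTop (𝓝 x) := by
  obtain ⟨x, -, hx⟩ :=
    (Set.infinite_univ (α := X)).exists_accPt_of_subset_isCompact isCompact_univ (subset_refl _)
  have : NeBot (𝓝[≠] x) := by simpa [AccPt] using hx
  obtain ⟨z, hz, hzx⟩ := mem_closure_iff_seq_limit.1 (closure_compl_singleton x ▸ Set.mem_univ x)
  exact ⟨x, z, hz, hzx⟩

/-- A distal expansive homeomorphism of a compact metric space has
finite phase space. -/
theorem stmt_14 {X : Type*} [MetricSpace X] [CompactSpace X] (f : X ≃ₜ X)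
    (hdis : ∀ x y : X, x ≠ y → ∃ c > (0 : ℝ), ∀ n : ℤ, c ≤ dist (iterZ f n x) (iterZ f n y))
    (hexp : Expansive f) :
    Finite X := by
  rw [← not_infinite_iff_finite]
  intro
  obtain ⟨c, hc, hexp⟩ := hexp
  obtain ⟨x, z, hzx, hz⟩ := exists_seq_ne_tendsto_of_infinite (X := X)
  choose n hn using fun k => hexp x (z k) (hzx k).symm
  have hsign : (∃ᶠ k in atTop, 0 ≤ n k) ∨ ∃ᶠ k in atTop, n k ≤ 0 :=
    frequently_or_distrib.1 (Frequently.of_forall fun k => le_total 0 (n k))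
  obtain ⟨A, B, hAB, hle⟩ : ∃ A B, A ≠ B ∧ ∀ m : ℤ, dist (iterZ f m A) (iterZ f m B) ≤ c := by
    rcases hsign with hsign | hsign <;>
      obtain ⟨φ, hφ, hφn⟩ := extraction_of_frequently_atTop hsign
    · exact IsDistal.exists_ne_forall_dist_le hdis hc (hz.comp hφ.tendsto_atTop)
        fun k => ⟨n (φ k), hφn k, hn (φ k)⟩
    · obtain ⟨A, B, hAB, hle⟩ := IsDistal.exists_ne_forall_dist_le (IsDistal.symm hdis) hc
        (hz.comp hφ.tendsto_atTop) fun k =>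
          ⟨-n (φ k), neg_nonneg.2 (hφn k), by
            simpa only [iterZ_symm, neg_neg, Function.comp_apply] using hn (φ k)⟩
      exact ⟨A, B, hAB, fun m => by simpa only [iterZ_symm, neg_neg] using hle (-m)⟩
  obtain ⟨m, hm⟩ := hexp A B hAB
  exact (hle m).not_gt hm
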